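/- Let P be a projective R-module and f : P → A a surjection. Then f is a projective cover of A (i.e., ker f is superfluous in P) if and only if every endomorphism x : P → P satisfying f ∘ x = f is an automorphism. -/
import Mathlib


universe u v

/-- A surjection `f : B → C` is essential if for every homomorphism `g : X → B`,
surjectivity of `f ∘ g` implies surjectivity of `g`. -/
def IsEssentialEpi (R : Type u) [Ring R] {B C : Type v} [AddCommGroup B] [Module R B]
    [AddCommGroup C] [Module R C] (f : B →ₗ[R] C) : Prop :=
  ∀ (X : Type v) (_ : AddCommGroup X) (_ : Module R X) (g : X →ₗ[R] B),
    Function.Surjective (f.comp g) → Function.Surjective g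

/-- For a surjection `f : P → A` with `P` projective, `f` is a projective cover
(an essential epimorphism) iff every endomorphism `x` of `P` with `f ∘ x = f`
is an automorphism. -/
theorem isEssentialEpi_iff_endo_bijective (R : Type u) [Ring R]
    (P : Type v) [AddCommGroup P] [Module R P]
    (A : Type v) [AddCommGroup A] [Module R A]
    (hP : Module.Projective R P) (f : P →ₗ[R] A) (hf : Function.Surjective f) :
    IsEssentialEpi R f ↔ ∀ x : P →ₗ[R] P, f.comp x = f → Function.Bijective x := by
  constructor
  · intro hess x hx
    have hxsurj : Function.Surjective x := by
      exact hess P _ _ x (by rw [hx]; exact hf)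
    -- split x using projectivity: s with x ∘ s = id
    obtain ⟨s, hs⟩ := Module.projective_lifting_property x (LinearMap.id) hxsurj
    have hfs : f.comp s = f := by
      calc f.comp s = (f.comp x).comp s := by rw [hx]
        _ = f.comp (x.comp s) := by rw [LinearMap.comp_assoc]
        _ = f := by rw [hs]; ext p; simp
    have hssurj : Function.Surjective s := by
      exact hess P _ _ s (by rw [hfs]; exact hf)
    refine ⟨?_, hxsurj⟩
    -- x ∘ s = id and s surjective ⇒ s ∘ x = id ⇒ x injective
    have hsx : s.comp x = LinearMap.id := by
      ext p
      obtain ⟨q, rfl⟩ := hssurj p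
      have : x (s q) = q := congrArg (fun g => g q) (congrArg DFunLike.coe hs)
      simp [this]
    intro a b hab
    have := congrArg s hab
    have h1 : s (x a) = a := congrArg (fun g => g a) (congrArg DFunLike.coe hsx)
    have h2 : s (x b) = b := congrArg (fun g => g b) (congrArg DFunLike.coe hsx)
    rw [h1, h2] at this; exact this
  · intro h X _ _ g hgs
    obtain ⟨hlift, hl⟩ := Module.projective_lifting_property (f.comp g) f hgs
    have hx : f.comp (g.comp hlift) = f := by
      rw [← LinearMap.comp_assoc, hl]
    have := (h _ hx).2
    intro p
    obtain ⟨q, hq⟩ := this p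
    exact ⟨hlift q, by simpa using hq⟩
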